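/- Let G be a connected loopless multigraph on a finite vertex set V, with spanning simple graph G̃ = (V, Ẽ) and multiplicity function μ. Then, as Laurent polynomials in ℤ[t,t⁻¹], T_G(−t,−1/t) = Σ_{F̃ ⊆ Ẽ} (−t−1)^{k(F̃)−1} · (−t⁻¹−1)^{|F̃|−|V|+k(F̃)} · Π_{e ∈ F̃} P(μ(e)). -/

import Mathlib

open LaurentPolynomial Finset

/-- Number of connected components of the simple graph on `V` with edge set `s`
(isolated vertices count as components). -/
noncomputable def numComponents (V : Type*) (s : Set (Sym2 V)) : ℕ :=
  Nat.card (SimpleGraph.fromEdgeSet s).ConnectedComponent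

/-- The evaluation `T_G(-t, -1/t)` of the Tutte polynomial of the multigraph
given by `ε : E → Sym2 V`, as a Laurent polynomial in `ℤ[t,t⁻¹]`. -/
noncomputable def tutteEval {V E : Type*} [Fintype V] [Fintype E]
    (ε : E → Sym2 V) : LaurentPolynomial ℤ :=
  ∑ F : Finset E,
    (-T 1 - 1) ^ (numComponents V (ε '' ↑F) - numComponents V (Set.range ε)) *
      (-T (-1) - 1) ^ (F.card + numComponents V (ε '' ↑F) - Fintype.card V)

/-- `P(m) = 1 - t⁻¹ + t⁻² - ⋯ ± t^{-(m-1)}`. -/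
noncomputable def Ppoly (m : ℕ) : LaurentPolynomial ℤ :=
  ∑ i ∈ Finset.range m, (-T (-1)) ^ i

section
variable {V E : Type*} [Fintype V] [DecidableEq V] [Fintype E]

/-- The edge set of the spanning simple graph of the multigraph `ε : E → Sym2 V`. -/
noncomputable def spanningEdges (ε : E → Sym2 V) : Finset (Sym2 V) :=
  Finset.image ε Finset.univ

/-- The multiplicity of an edge `e` of the spanning simple graph. -/
noncomputable def edgeMult (ε : E → Sym2 V) (e : Sym2 V) : ℕ :=
  Nat.card {f : E // ε f = e}

/-- `n(j)`: the number of edges of the spanning simple graph of multiplicity `≥ j`. -/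
noncomputable def nMult (ε : E → Sym2 V) (j : ℕ) : ℕ :=
  Nat.card {e : Sym2 V // e ∈ spanningEdges ε ∧ j ≤ edgeMult ε e}

/-- The number of triangles in the spanning simple graph. -/
noncomputable def numTriangles (ε : E → Sym2 V) : ℕ :=
  Nat.card {s : Finset V // s.card = 3 ∧
    ∀ u ∈ s, ∀ v ∈ s, u ≠ v → s(u, v) ∈ spanningEdges ε}
end

/-!
Group the subsets `F ⊆ E` by their image `F̃ = ε(F) ⊆ Ẽ`. The number of components only sees
`F̃`, so the summand of `F` is the summand of `F̃` times `(-t⁻¹ - 1)^(|F| - |F̃|)`, the defect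
`|F| - |F̃|` splitting over the parallel classes as `Σ_{e ∈ F̃} (|F ∩ ε⁻¹(e)| - 1)`. Choosing `F`
over `F̃` means choosing a nonempty subset of every parallel class, and for a class of size `m`
`Σ_{∅ ≠ S ⊆ [m]} z^(|S| - 1) = Σ_{i < m} (z + 1)^i`, which is `P(m)` at `z = -t⁻¹ - 1`.
-/

namespace Finset

theorem sum_filter_nonempty_powerset_pow_card_sub_one {ι R : Type*} [DecidableEq ι]
    [CommSemiring R] (z : R) (s : Finset ι) :
    ∑ t ∈ s.powerset with t.Nonempty, z ^ (#t - 1) = ∑ i ∈ range #s, (z + 1) ^ i := by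
  induction s using Finset.induction_on with
  | empty => simp [filter_singleton]
  | insert a s ha ih =>
    rw [sum_filter, sum_powerset_insert ha, ← sum_filter, ih, card_insert_of_notMem ha,
      sum_range_succ, ← sum_pow_mul_eq_add_pow z 1 s]
    congr 1
    refine sum_congr rfl fun t ht => ?_
    have hat : a ∉ t := fun h => ha (mem_powerset.mp ht h)
    simp [card_insert_of_notMem hat]

theorem pow_card_sub_card_image_eq_prod {ι α M : Type*} [DecidableEq α] [CommMonoid M]
    (ε : ι → α) (F : Finset ι) (b : M) :
    b ^ (#F - #(F.image ε)) = ∏ e ∈ F.image ε, b ^ (#{f ∈ F | ε f = e} - 1) := by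
  have hpos : ∀ e ∈ F.image ε, 1 ≤ #{f ∈ F | ε f = e} := fun e he => by
    obtain ⟨f, hf, rfl⟩ := mem_image.mp he
    exact card_pos.mpr ⟨f, mem_filter.mpr ⟨hf, rfl⟩⟩
  rw [prod_pow_eq_pow_sum, sum_tsub_distrib _ hpos, ← card_eq_sum_card_image, sum_const,
    smul_eq_mul, mul_one]

theorem sum_filter_image_eq_prod_sum_nonempty {ι α R : Type*} [Fintype ι] [DecidableEq ι]
    [DecidableEq α] [CommSemiring R] (ε : ι → α) (s : Finset α) (w : α → Finset ι → R) :
    ∑ F : Finset ι with F.image ε = s, ∏ e ∈ s, w e {f ∈ F | ε f = e} =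
      ∏ e ∈ s, ∑ t ∈ ({f | ε f = e} : Finset ι).powerset with t.Nonempty, w e t := by
  rw [prod_sum]
  refine sum_nbij' (fun F e _ => {f ∈ F | ε f = e}) (fun p => s.attach.biUnion fun e => p e.1 e.2)
    ?_ ?_ ?_ ?_ ?_
  · rintro F hF
    simp only [mem_filter, mem_univ, true_and] at hF
    simp only [mem_pi, mem_filter, mem_powerset]
    intro e he
    subst hF
    obtain ⟨f, hf, rfl⟩ := mem_image.mp he
    exact ⟨fun x hx => by simp_all, f, by simp [hf]⟩
  · intro p hp
    simp only [mem_pi, mem_filter, mem_powerset, subset_iff] at hp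
    simp only [mem_filter, mem_univ, true_and]
    ext e
    simp only [mem_image, mem_biUnion, mem_attach, true_and, Subtype.exists]
    constructor
    · rintro ⟨f, ⟨e', he', hf⟩, rfl⟩
      simpa [(hp e' he').1 hf] using he'
    · intro he
      obtain ⟨f, hf⟩ := (hp e he).2
      exact ⟨f, ⟨e, he, hf⟩, by simpa using (hp e he).1 hf⟩
  · intro F hF
    simp only [mem_filter, mem_univ, true_and] at hF
    ext f
    simp only [mem_biUnion, mem_attach, true_and, Subtype.exists, mem_filter]
    exact ⟨fun ⟨_, _, hf, _⟩ => hf, fun hf => ⟨ε f, hF ▸ mem_image_of_mem ε hf, hf, rfl⟩⟩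
  · intro p hp
    simp only [mem_pi, mem_filter, mem_powerset, subset_iff] at hp
    ext e he f
    simp only [mem_filter, mem_biUnion, mem_attach, true_and, Subtype.exists]
    constructor
    · rintro ⟨⟨e', he', hf⟩, rfl⟩
      obtain rfl : ε f = e' := by simpa using (hp e' he').1 hf
      exact hf
    · intro hf
      exact ⟨⟨e, he, hf⟩, by simpa using (hp e he).1 hf⟩
  · intro F _
    exact (prod_attach s fun e => w e {f ∈ F | ε f = e}).symm

end Finset

namespace SimpleGraph

variable {V : Type*} {G : SimpleGraph V}

theorem Reachable.of_sup_edge {u v a b : V} (h : (G ⊔ edge u v).Reachable a b) :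
    G.Reachable a b ∨ (G.Reachable a u ∧ G.Reachable b v) ∨
      (G.Reachable a v ∧ G.Reachable b u) := by
  obtain ⟨w⟩ := h
  induction w with
  | nil => exact Or.inl .rfl
  | cons hadj _ ih =>
    rw [sup_adj, edge_adj] at hadj
    rcases hadj with hadj | ⟨⟨rfl, rfl⟩ | ⟨rfl, rfl⟩, -⟩
    · have := hadj.reachable
      rcases ih with hr | ⟨h2, h3⟩ | ⟨h2, h3⟩
      · exact Or.inl (this.trans hr)
      · exact Or.inr (Or.inl ⟨this.trans h2, h3⟩)
      · exact Or.inr (Or.inr ⟨this.trans h2, h3⟩)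
    · rcases ih with hr | ⟨h2, h3⟩ | ⟨h2, h3⟩
      · exact Or.inr (Or.inl ⟨.rfl, hr.symm⟩)
      · exact Or.inl (h2.symm.trans h3.symm)
      · exact Or.inl h3.symm
    · rcases ih with hr | ⟨h2, h3⟩ | ⟨h2, h3⟩
      · exact Or.inr (Or.inr ⟨.rfl, hr.symm⟩)
      · exact Or.inl h3.symm
      · exact Or.inl (h2.symm.trans h3.symm)

theorem card_connectedComponent_le_card_sup_edge_add_one [Finite V] (u v : V) :
    Nat.card G.ConnectedComponent ≤ Nat.card (G ⊔ edge u v).ConnectedComponent + 1 := by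
  classical
  have := Fintype.ofFinite V
  -- Adding the edge can only merge the component of `u` with that of `v`.
  let f := ConnectedComponent.map (Hom.ofLE (le_sup_left : G ≤ G ⊔ edge u v))
  have hinj : Set.InjOn f ↑(univ.erase (G.connectedComponentMk u)) := by
    intro c₁ hc₁ c₂ hc₂ hf
    induction c₁, c₂ using ConnectedComponent.ind₂ with
    | _ a b =>
      simp only [coe_erase, coe_univ, Set.mem_sdiff, Set.mem_univ, Set.mem_singleton_iff,
        true_and] at hc₁ hc₂
      simp only [f, ConnectedComponent.map_mk, Hom.ofLE_apply, ConnectedComponent.eq] at hf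
      rcases hf.of_sup_edge with hr | ⟨hau, -⟩ | ⟨-, hbu⟩
      · exact ConnectedComponent.sound hr
      · exact absurd (ConnectedComponent.sound hau) hc₁
      · exact absurd (ConnectedComponent.sound hbu) hc₂
  have hcard := card_le_card_of_injOn f (fun _ _ => mem_univ _) hinj
  rw [card_erase_of_mem (mem_univ _), card_univ, card_univ] at hcard
  simp only [Nat.card_eq_fintype_card]
  omega

theorem fromEdgeSet_insert (s : Set (Sym2 V)) (u v : V) :
    fromEdgeSet (insert s(u, v) s) = fromEdgeSet s ⊔ edge u v := by
  rw [Set.insert_eq, fromEdgeSet_union, sup_comm, edge]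

end SimpleGraph

open SimpleGraph

theorem numComponents_empty (V : Type*) [Fintype V] : numComponents V ∅ = Fintype.card V := by
  rw [numComponents, fromEdgeSet_empty, ← Nat.card_eq_fintype_card]
  refine (Nat.card_eq_of_bijective _ ⟨fun a b h => ?_, Quot.mk_surjective⟩).symm
  exact reachable_bot.mp (ConnectedComponent.eq.mp h)

theorem card_le_card_add_numComponents {V : Type*} [Fintype V] [DecidableEq V]
    (s : Finset (Sym2 V)) : Fintype.card V ≤ #s + numComponents V s := by
  induction s using Finset.induction_on with
  | empty => simp [numComponents_empty]
  | insert e s he ih =>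
    induction e using Sym2.ind with
    | _ u v =>
      have hmerge := card_connectedComponent_le_card_sup_edge_add_one (G := fromEdgeSet ↑s) u v
      rw [numComponents] at ih
      rw [card_insert_of_notMem he, coe_insert, numComponents, fromEdgeSet_insert]
      omega

theorem pow_card_add_numComponents_image_sub_card {V E M : Type*} [Fintype V] [DecidableEq V]
    [CommMonoid M] (ε : E → Sym2 V) (F : Finset E) (b : M) :
    b ^ (#F + numComponents V (ε '' ↑F) - Fintype.card V) =
      b ^ (#(F.image ε) + numComponents V ↑(F.image ε) - Fintype.card V) *
        ∏ e ∈ F.image ε, b ^ (#{f ∈ F | ε f = e} - 1) := by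
  have hrank := card_le_card_add_numComponents (F.image ε)
  have himage := card_image_le (s := F) (f := ε)
  rw [← pow_card_sub_card_image_eq_prod, ← pow_add, ← coe_image]
  congr 1
  omega

theorem edgeMult_eq_card {V E : Type*} [DecidableEq V] [Fintype E] (ε : E → Sym2 V)
    (e : Sym2 V) : edgeMult ε e = #({f | ε f = e} : Finset E) := by
  rw [edgeMult, Nat.card_eq_fintype_card, Fintype.card_subtype]

theorem tutteEval_eq_sum_spanning_general {V E : Type*} [Fintype V] [DecidableEq V] [Fintype E]
    (ε : E → Sym2 V)
    (hconn : numComponents V (Set.range ε) = 1) :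
    tutteEval ε =
      ∑ Fs ∈ (spanningEdges ε).powerset,
        (-T 1 - 1) ^ (numComponents V (↑Fs : Set (Sym2 V)) - 1) *
          (-T (-1) - 1) ^ (Fs.card + numComponents V (↑Fs : Set (Sym2 V)) - Fintype.card V) *
          ∏ e ∈ Fs, Ppoly (edgeMult ε e) := by
  classical
  have hmaps : ∀ F ∈ (univ : Finset (Finset E)), F.image ε ∈ (spanningEdges ε).powerset :=
    fun F _ => mem_powerset.mpr (image_subset_image (subset_univ F))
  rw [tutteEval, ← sum_fiberwise_of_maps_to hmaps]
  refine sum_congr rfl fun Fs _ => ?_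
  set B : LaurentPolynomial ℤ := -T (-1) - 1
  calc _ = ∑ F : Finset E with F.image ε = Fs,
        (-T 1 - 1) ^ (numComponents V ↑Fs - 1) *
          B ^ (#Fs + numComponents V ↑Fs - Fintype.card V) *
          ∏ e ∈ Fs, B ^ (#{f ∈ F | ε f = e} - 1) := by
        refine sum_congr rfl fun F hF => ?_
        obtain rfl := (mem_filter.mp hF).2
        rw [pow_card_add_numComponents_image_sub_card, ← coe_image, hconn, mul_assoc]
    _ = _ := by
        rw [← mul_sum, sum_filter_image_eq_prod_sum_nonempty ε Fs fun _ t => B ^ (#t - 1)]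
        refine congrArg _ (prod_congr rfl fun e _ => ?_)
        rw [sum_filter_nonempty_powerset_pow_card_sub_one, sub_add_cancel, Ppoly,
          edgeMult_eq_card]

/-- For a connected loopless multigraph `ε : E → Sym2 V`, the Tutte
evaluation `T_G(-t,-1/t)` equals the weighted sum over subsets of the spanning
simple graph's edge set. -/
theorem tutteEval_eq_sum_spanning {V E : Type*} [Fintype V] [DecidableEq V] [Fintype E]
    (ε : E → Sym2 V)
    (hloopless : ∀ f : E, ¬ (ε f).IsDiag)
    (hconn : numComponents V (Set.range ε) = 1) :
    tutteEval ε =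
      ∑ Fs ∈ (spanningEdges ε).powerset,
        (-T 1 - 1) ^ (numComponents V (↑Fs : Set (Sym2 V)) - 1) *
          (-T (-1) - 1) ^ (Fs.card + numComponents V (↑Fs : Set (Sym2 V)) - Fintype.card V) *
          ∏ e ∈ Fs, Ppoly (edgeMult ε e) :=
  tutteEval_eq_sum_spanning_general ε hconn
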